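/- arXiv:2102.03731 — 3 statements merged into one kernel-verified Lean document; each statement's English description precedes it below -/
import Mathlib

section
/- For every r_user with 0 < r_user < r_* (r_* ≈ 4.864 the positive root of 1+2r−r^{3/2}=0) there exists a constant c > 0, depending only on r_user, with the following property: for every N ≥ 2, every family of positive step sizes τ_1,…,τ_N whose step ratios satisfy 0 < r_k ≤ r_user for 2 ≤ k ≤ N, every n with 2 ≤ n ≤ N, every ε > 0, and all real sequences v_2,…,v_n and w_2,…,w_n, the Young-type convolution inequality holds: Σ_{k=2}^{n} Σ_{j=2}^{k} θ_{k-j}^{(k)} w_k v_j ≤ ε Σ_{k=2}^{n} Σ_{j=2}^{k} θ_{k-j}^{(k)} v_k v_j + (c/(2ε)) Σ_{k=2}^{n} τ_k w_k². -/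
/-- The adjacent time-step ratio `r_k := τ_k / τ_{k-1}`. -/
noncomputable def ratio (τ : ℕ → ℝ) (k : ℕ) : ℝ := τ k / τ (k - 1)

/-- The BDF2 kernel `b_0^{(n)} := (1+2r_n)/(τ_n(1+r_n))`. -/
noncomputable def b0 (τ : ℕ → ℝ) (n : ℕ) : ℝ :=
  (1 + 2 * ratio τ n) / (τ n * (1 + ratio τ n))

/-- The BDF2 kernel `b_1^{(n)} := -r_n²/(τ_n(1+r_n))`. -/
noncomputable def b1 (τ : ℕ → ℝ) (n : ℕ) : ℝ :=
  -(ratio τ n ^ 2) / (τ n * (1 + ratio τ n))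

/-- The BDF2 kernels `b_j^{(n)}`: `b_0^{(n)}`, `b_1^{(n)}` and zero for `j ≥ 2`. -/
noncomputable def bker (τ : ℕ → ℝ) (j n : ℕ) : ℝ :=
  if j = 0 then b0 τ n else if j = 1 then b1 τ n else 0

lemma sum_triangle_comm (n : ℕ) (f : ℕ → ℕ → ℝ) :
    ∑ k ∈ Finset.Icc 2 n, ∑ j ∈ Finset.Icc 2 k, f k j
      = ∑ j ∈ Finset.Icc 2 n, ∑ k ∈ Finset.Icc j n, f k j := by
  induction n with
  | zero => simp
  | succ m ih =>
    rcases Nat.lt_or_ge m 1 with hm | hm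
    · interval_cases m
      · simp [show Finset.Icc 2 1 = ∅ from rfl]
    · have h2 : 2 ≤ m + 1 := by omega
      have hrhs : ∑ j ∈ Finset.Icc 2 (m+1), ∑ k ∈ Finset.Icc j (m+1), f k j
          = ∑ j ∈ Finset.Icc 2 m, ∑ k ∈ Finset.Icc j m, f k j
            + (∑ j ∈ Finset.Icc 2 m, f (m+1) j + f (m+1) (m+1)) := by
        rw [Finset.sum_Icc_succ_top h2, Finset.Icc_self, Finset.sum_singleton]
        have hsplit : ∀ j ∈ Finset.Icc 2 m, ∑ k ∈ Finset.Icc j (m+1), f k j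
            = ∑ k ∈ Finset.Icc j m, f k j + f (m+1) j := by
          intro j hj
          exact Finset.sum_Icc_succ_top (by have := (Finset.mem_Icc.mp hj).2; omega) _
        rw [Finset.sum_congr rfl hsplit, Finset.sum_add_distrib]
        ring
      rw [Finset.sum_Icc_succ_top h2, ih, hrhs, Finset.sum_Icc_succ_top h2]

lemma geom_tail_le {q : ℝ} (h0 : 0 ≤ q) (h1 : q < 1) (m : ℕ) :
    ∑ i ∈ Finset.range m, q ^ i ≤ 1 / (1 - q) := by
  have hq : 0 < 1 - q := by linarith
  rw [geom_sum_eq (by intro h; rw [h] at h1; linarith) m]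
  have he : (q ^ m - 1) / (q - 1) = (1 - q ^ m) / (1 - q) := by
    rw [div_eq_div_iff (by linarith : q - 1 ≠ 0) (by linarith : 1 - q ≠ 0)]
    ring
  rw [he]
  gcongr
  linarith [pow_nonneg h0 m]

lemma alg_qlt1 {t x : ℝ} (ht3 : t^3 = 1+2*t^2) (ht2 : 2 < t) (hx0 : 0 ≤ x) (hxt : x < t) :
    x^3 < 1 + 2*x^2 := by
  have hid : 1 + 2*x^2 - x^3 = (t-x)*(x^2+(t-2)*x+(t^2-2*t)) := by linear_combination -ht3
  nlinarith [mul_pos (by linarith : (0:ℝ) < t - x)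
    (by nlinarith : (0:ℝ) < x^2+(t-2)*x+(t^2-2*t))]

lemma alg_phiK {t x : ℝ} (ht3 : t^3 = 1+2*t^2) (ht2 : 2 < t) (hx0 : 0 ≤ x) (hxt : x ≤ t) :
    x^3*(1+t^2) ≤ (1+2*t^2)*(1+x^2) := by
  have hid : (1+2*t^2)*(1+x^2) - x^3*(1+t^2) = (t-x)*((1+t^2)*x^2 + t*x + t^2) := by
    linear_combination (-(1+x^2))*ht3
  nlinarith [mul_nonneg (by linarith : (0:ℝ) ≤ t - x)
    (by nlinarith : (0:ℝ) ≤ (1+t^2)*x^2 + t*x + t^2)]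

lemma alg_F {t z x : ℝ} (ht3 : t^3 = 1+2*t^2) (ht2 : 2 < t) (hx0 : 0 ≤ x) (hxz : x ≤ z)
    (hzt : z < t) :
    (t - z)*(t^2-2*t) ≤ (1+t^2)*(2*(1+2*x^2) - x^3 - ((1+2*t^2)/(1+t^2))*(1+x^2)) := by
  have ht2pos : (0:ℝ) < 1 + t^2 := by positivity
  have hid : (1+t^2)*(2*(1+2*x^2) - x^3 - ((1+2*t^2)/(1+t^2))*(1+x^2))
      = (t-x)*((1+t^2)*x^2+(t-2)*x+(t^2-2*t)) := by
    field_simp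
    linear_combination (-(1+x^2))*ht3
  rw [hid]
  have h1 : t - z ≤ t - x := by linarith
  have h2 : t^2 - 2*t ≤ (1+t^2)*x^2+(t-2)*x+(t^2-2*t) := by nlinarith
  have h3 : (0:ℝ) ≤ t^2 - 2*t := by nlinarith
  have h4 : (0:ℝ) < t - x := by linarith
  nlinarith

lemma alg_mono {y z : ℝ} (hy : 0 ≤ y) (hyz : y ≤ z) : y^3*(1+2*z^2) ≤ z^3*(1+2*y^2) := by
  nlinarith [mul_nonneg (sub_nonneg.2 hyz) (by nlinarith : (0:ℝ) ≤ z^2+z*y+y^2),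
    mul_nonneg (mul_nonneg (mul_nonneg hy hy) (mul_nonneg (hy.trans hyz) (hy.trans hyz)))
      (sub_nonneg.2 hyz)]

lemma key_step {rj y z S : ℝ} (hrj : 0 < rj) (hy : 0 < y) (hyz : y ≤ z) (hS : 0 ≤ S) :
    (y^2*(1+rj)/((1+y^2)*(1+2*rj))) * ((y*S) * ((1+y^2)/(1+2*y^2)))
      ≤ (z^2*z/(1+2*z^2)) * (S * ((1+rj)/(1+2*rj))) := by
  have hz : 0 < z := lt_of_lt_of_le hy hyz
  have h1 : (y^2*(1+rj)/((1+y^2)*(1+2*rj))) * ((y*S) * ((1+y^2)/(1+2*y^2)))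
      = (y^3/(1+2*y^2)) * (S * ((1+rj)/(1+2*rj))) := by
    have ne1 : (1:ℝ)+y^2 ≠ 0 := by positivity
    have ne2 : (1:ℝ)+2*rj ≠ 0 := by linarith
    have ne3 : (1:ℝ)+2*y^2 ≠ 0 := by positivity
    field_simp
  have h2 : (z^2*z/(1+2*z^2)) = z^3/(1+2*z^2) := by ring
  rw [h1, h2]
  apply mul_le_mul_of_nonneg_right
  · rw [div_le_div_iff₀ (by positivity) (by positivity)]
    linarith [alg_mono hy.le hyz]
  · exact mul_nonneg hS (le_of_lt (div_pos (by linarith) (by linarith)))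


set_option maxHeartbeats 4000000 in
theorem doc_young_type_convolution_inequality
    (ruser rstar : ℝ) (hruser_pos : 0 < ruser)
    (hrstar_pos : 0 < rstar)
    (hrstar_root : 1 + 2 * rstar - rstar ^ ((3 : ℝ) / 2) = 0)
    (hru : ruser < rstar) :
    ∃ c : ℝ, 0 < c ∧
      ∀ (N : ℕ), 2 ≤ N → ∀ τ : ℕ → ℝ,
        (∀ k, 1 ≤ k → k ≤ N → 0 < τ k) →
        (∀ k, 2 ≤ k → k ≤ N → 0 < ratio τ k ∧ ratio τ k ≤ ruser) →
        ∀ θ : ℕ → ℕ → ℝ,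
        (∀ n, 2 ≤ n → θ n n = 1 / b0 τ n) →
        (∀ n k, 2 ≤ k → k < n →
          θ n k = -(1 / b0 τ k) * ∑ j ∈ Finset.Icc (k + 1) n, θ n j * bker τ (j - k) j) →
        ∀ n, 2 ≤ n → n ≤ N → ∀ ε : ℝ, 0 < ε → ∀ v w : ℕ → ℝ,
          ∑ k ∈ Finset.Icc 2 n, ∑ j ∈ Finset.Icc 2 k, θ k j * w k * v j
            ≤ ε * ∑ k ∈ Finset.Icc 2 n, ∑ j ∈ Finset.Icc 2 k, θ k j * v k * v j
              + c / (2 * ε) * ∑ k ∈ Finset.Icc 2 n, τ k * w k ^ 2 := by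
  -- constants depending only on ruser, rstar
  set t := Real.sqrt rstar with htdef
  have ht2 : t^2 = rstar := Real.sq_sqrt hrstar_pos.le
  have ht3 : t^3 = 1 + 2*t^2 := by
    have h1 : rstar ^ ((3:ℝ)/2) = t ^ (3:ℕ) := by
      rw [show ((3:ℝ)/2) = (1/2) * ((3:ℕ):ℝ) by norm_num, Real.rpow_mul hrstar_pos.le,
        Real.rpow_natCast, ← Real.sqrt_eq_rpow]
    rw [ht2]
    have := hrstar_root
    rw [h1] at this
    linarith
  have htgt2 : 2 < t := by nlinarith [Real.sqrt_nonneg rstar, sq_nonneg (t-1)]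
  set z := Real.sqrt ruser with hzdef
  have hz2 : z^2 = ruser := Real.sq_sqrt hruser_pos.le
  have hz0 : 0 < z := Real.sqrt_pos.2 hruser_pos
  have hzt : z < t := Real.sqrt_lt_sqrt hruser_pos.le hru
  set q := ruser * z / (1+2*ruser) with hqdef
  have hq0 : 0 < q := by
    apply div_pos (mul_pos hruser_pos hz0) (by linarith)
  have hq1 : q < 1 := by
    have h := alg_qlt1 ht3 htgt2 hz0.le hzt
    rw [hqdef, div_lt_one (by linarith)]
    nlinarith [hz2]
  set K := (1+2*rstar)/(1+rstar) with hKdef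
  have hK0 : 0 < K := div_pos (by linarith) (by linarith)
  set d0 := (t - z)*(t^2 - 2*t) with hd0def
  have hd00 : 0 < d0 := mul_pos (by linarith) (by nlinarith)
  set m1 := d0/(2*(1+ruser)*(1+rstar)) with hm1def
  have hm10 : 0 < m1 :=
    div_pos hd00 (mul_pos (mul_pos two_pos (by linarith)) (by linarith))
  set C2 := 8 + 2*ruser^3 with hC2def
  have hC20 : 0 < C2 := by nlinarith [pow_pos hruser_pos 3]
  set m0 := m1/C2 with hm0def
  have hm00 : 0 < m0 := div_pos hm10 hC20
  have hcpos : (0:ℝ) < 2*m0*(1-q)^2 :=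
    mul_pos (mul_pos two_pos hm00) (pow_pos (by linarith) 2)
  clear_value t z q K d0 m1 C2 m0
  refine ⟨1/(2*m0*(1-q)^2), one_div_pos.2 hcpos, ?_⟩
  intro N hN τ hτ hr θ hθd hθr n hn2 hnN ε hε v w
  -- basic positivity facts
  have hrpos : ∀ k, 2 ≤ k → k ≤ N → 0 < ratio τ k := fun k h1 h2 => (hr k h1 h2).1
  have hrle : ∀ k, 2 ≤ k → k ≤ N → ratio τ k ≤ ruser := fun k h1 h2 => (hr k h1 h2).2
  have hτeq : ∀ k, 2 ≤ k → k ≤ N → τ k = ratio τ k * τ (k-1) := by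
    intro k h1 h2
    have h3 : τ (k-1) ≠ 0 := (hτ (k-1) (by omega) (by omega)).ne'
    rw [ratio, div_mul_cancel₀ _ h3]
  have hb0pos : ∀ k, 2 ≤ k → k ≤ N → 0 < b0 τ k := by
    intro k h1 h2
    have ha := hrpos k h1 h2
    have hb := hτ k (by omega) h2
    exact div_pos (by linarith) (by nlinarith)
  have hb1neg : ∀ k, 2 ≤ k → k ≤ N → 0 ≤ -(b1 τ k) := by
    intro k h1 h2
    have ha := hrpos k h1 h2
    have hb := hτ k (by omega) h2
    rw [b1, neg_div, neg_neg]
    exact (div_pos (by positivity) (by nlinarith)).le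
  -- the DOC kernel ratio
  obtain ⟨ρ, hρdef⟩ : ∃ ρ : ℕ → ℝ, ∀ i, ρ i = (-(b1 τ (i+1))) / b0 τ i :=
    ⟨_, fun i => rfl⟩
  have hρ0 : ∀ i, 2 ≤ i → i+1 ≤ N → 0 ≤ ρ i := by
    intro i h1 h2
    rw [hρdef i]
    exact div_nonneg (hb1neg (i+1) (by omega) h2) (hb0pos i h1 (by omega)).le
  have theta_step : ∀ k j, 2 ≤ j → j < k → θ k j = ρ j * θ k (j+1) := by
    intro k j h2 hjk
    rw [hθr k j h2 hjk]
    have hsum : ∑ i ∈ Finset.Icc (j+1) k, θ k i * bker τ (i-j) i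
        = θ k (j+1) * b1 τ (j+1) := by
      rw [Finset.sum_eq_single_of_mem (j+1) (Finset.mem_Icc.mpr ⟨le_refl _, hjk⟩)]
      · rw [show (j+1) - j = 1 by omega]
        simp [bker]
      · intro b hb hne
        have hb' := Finset.mem_Icc.mp hb
        have h1 : b - j ≠ 0 := by omega
        have h2' : b - j ≠ 1 := by omega
        simp [bker, h1, h2']
    rw [hsum, hρdef j]
    ring
  have theta_prod : ∀ d j, 2 ≤ j →
      θ (j+d) j = (1/b0 τ (j+d)) * ∏ i ∈ Finset.Ico j (j+d), ρ i := by
    intro d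
    induction d with
    | zero =>
      intro j h2
      simp [hθd j h2]
    | succ d ih =>
      intro j h2
      rw [theta_step (j+(d+1)) j h2 (by omega)]
      have hih := ih (j+1) (by omega)
      rw [show j+1+d = j+(d+1) by omega] at hih
      rw [hih, Finset.prod_eq_prod_Ico_succ_bot (by omega : j < j + (d+1))]
      ring
  have theta_formula : ∀ k j, 2 ≤ j → j ≤ k →
      θ k j = (1/b0 τ k) * ∏ i ∈ Finset.Ico j k, ρ i := by
    intro k j h2 hjk
    have h := theta_prod (k-j) j h2
    rw [show j + (k-j) = k by omega] at h
    exact h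
  have theta_nonneg : ∀ k j, 2 ≤ j → j ≤ k → k ≤ N → 0 ≤ θ k j := by
    intro k j h2 hjk hkN
    rw [theta_formula k j h2 hjk]
    apply mul_nonneg
    · exact (one_div_pos.2 (hb0pos k (by omega) hkN)).le
    · apply Finset.prod_nonneg
      intro i hi
      have hi' := Finset.mem_Ico.mp hi
      exact hρ0 i (by omega) (by omega)
  have theta_row : ∀ k j, 3 ≤ k → k ≤ N → 2 ≤ j → j ≤ k-1 →
      θ k j = (-(b1 τ k)/b0 τ k) * θ (k-1) j := by
    intro k j h3 hkN h2 hjk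
    have hk1 : k - 1 + 1 = k := by omega
    have h1 := theta_formula k j h2 (by omega)
    have h2' := theta_formula (k-1) j h2 hjk
    rw [h1, h2', ← hk1, Finset.prod_Ico_succ_top hjk, hρdef (k-1)]
    rw [hk1]
    ring
  -- the convolution u = θ * v
  obtain ⟨u, hudef⟩ : ∃ u : ℕ → ℝ, ∀ k, u k = ∑ j ∈ Finset.Icc 2 k, θ k j * v j :=
    ⟨_, fun k => rfl⟩
  have hu1 : u 1 = 0 := by
    rw [hudef 1, Finset.Icc_eq_empty (by omega), Finset.sum_empty]
  have u_rec : ∀ k, 2 ≤ k → k ≤ N → b0 τ k * u k + b1 τ k * u (k-1) = v k := by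
    intro k h2 hkN
    have hb0k : b0 τ k ≠ 0 := (hb0pos k h2 hkN).ne'
    rcases eq_or_lt_of_le h2 with h | h
    · have hk2 : k = 2 := h.symm
      subst hk2
      have hu2 : u 2 = (1/b0 τ 2) * v 2 := by
        rw [hudef 2, Finset.Icc_self, Finset.sum_singleton, hθd 2 (le_refl _)]
      rw [hu2, show (2:ℕ) - 1 = 1 from rfl, hu1]
      field_simp
      ring
    · have h3 : 3 ≤ k := h
      have hk1 : k - 1 + 1 = k := by omega
      have hsplit : u k = (∑ j ∈ Finset.Icc 2 (k-1), θ k j * v j) + θ k k * v k := by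
        rw [hudef k, ← hk1, Finset.sum_Icc_succ_top (by omega : 2 ≤ k-1+1), hk1]
      have hrow : ∑ j ∈ Finset.Icc 2 (k-1), θ k j * v j = (-(b1 τ k)/b0 τ k) * u (k-1) := by
        rw [hudef (k-1), Finset.mul_sum]
        apply Finset.sum_congr rfl
        intro j hj
        have hj' := Finset.mem_Icc.mp hj
        rw [theta_row k j h3 hkN hj'.1 hj'.2]
        ring
      rw [hsplit, hrow, hθd k h2]
      field_simp
      ring
  -- per-step positive definiteness estimate
  have pd : ∀ k, 2 ≤ k → k ≤ N →
      m1 * ((u k)^2/τ k) + (K/(2*τ k)*(u k)^2 - K/(2*τ (k-1))*(u (k-1))^2)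
        ≤ v k * u k := by
    intro k h2 hkN
    have hvk := u_rec k h2 hkN
    have hT : 0 < τ (k-1) := hτ (k-1) (by omega) (by omega)
    have hr0 : 0 < ratio τ k := hrpos k h2 hkN
    have hrR : ratio τ k ≤ ruser := hrle k h2 hkN
    have hτk : τ k = ratio τ k * τ (k-1) := hτeq k h2 hkN
    set x := Real.sqrt (ratio τ k) with hxdef
    have hx2 : x^2 = ratio τ k := Real.sq_sqrt hr0.le
    have hx0 : 0 < x := Real.sqrt_pos.2 hr0
    have hxz : x ≤ z := by
      rw [hxdef, hzdef]; exact Real.sqrt_le_sqrt hrR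
    have hxt : x ≤ t := hxz.trans hzt.le
    have hKt : K = (1+2*t^2)/(1+t^2) := by rw [hKdef, ht2]
    have hphi : x^3 ≤ K*(1+x^2) := by
      have h := alg_phiK ht3 htgt2 hx0.le hxt
      rw [hKt, div_mul_eq_mul_div, le_div_iff₀ (by positivity)]
      linarith [h]
    have hstar : 2*m1*(1+x^2) ≤ 2*(1+2*x^2) - x^3 - K*(1+x^2) := by
      have hF := alg_F ht3 htgt2 hx0.le hxz hzt
      rw [← hKt] at hF
      have h1 : d0/(1+t^2) ≤ 2*(1+2*x^2) - x^3 - K*(1+x^2) := by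
        rw [div_le_iff₀ (by positivity : (0:ℝ) < 1+t^2)]
        rw [hd0def]
        linarith [hF]
      have h2' : d0/(1+t^2) = 2*m1*(1+ruser) := by
        rw [hm1def, ht2]
        field_simp
      have h3 : 2*m1*(1+x^2) ≤ 2*m1*(1+ruser) := by
        have hxr : x^2 ≤ ruser := by rw [hx2]; exact hrR
        have hmm := mul_le_mul_of_nonneg_left hxr (mul_pos two_pos hm10).le
        linarith [hmm]
      linarith
    have hnum : 0 ≤ 2*(1+2*x^2)*(u k)^2 - 2*x^4*(u (k-1))*(u k) - 2*m1*(1+x^2)*(u k)^2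
        - K*(1+x^2)*(u k)^2 + K*x^2*(1+x^2)*(u (k-1))^2 := by
      have h1 : 0 ≤ x^3 * (u k - x*(u (k-1)))^2 := by positivity
      have h2' : 0 ≤ x^2*(u (k-1))^2*(K*(1+x^2) - x^3) :=
        mul_nonneg (mul_nonneg (sq_nonneg x) (sq_nonneg _)) (by linarith)
      have h3 : 0 ≤ (u k)^2*(2*(1+2*x^2) - x^3 - K*(1+x^2) - 2*m1*(1+x^2)) :=
        mul_nonneg (sq_nonneg _) (by linarith)
      have hid : 2*(1+2*x^2)*(u k)^2 - 2*x^4*(u (k-1))*(u k) - 2*m1*(1+x^2)*(u k)^2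
          - K*(1+x^2)*(u k)^2 + K*x^2*(1+x^2)*(u (k-1))^2
          = x^3 * (u k - x*(u (k-1)))^2 + x^2*(u (k-1))^2*(K*(1+x^2) - x^3)
            + (u k)^2*(2*(1+2*x^2) - x^3 - K*(1+x^2) - 2*m1*(1+x^2)) := by ring
      rw [hid]
      linarith [h1, h2', h3]
    have hden : (0:ℝ) < 2*(x^2*τ (k-1))*(1+x^2) := by positivity
    have hdiff : v k * u k
        - (m1 * ((u k)^2/τ k) + (K/(2*τ k)*(u k)^2 - K/(2*τ (k-1))*(u (k-1))^2))
        = (2*(1+2*x^2)*(u k)^2 - 2*x^4*(u (k-1))*(u k) - 2*m1*(1+x^2)*(u k)^2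
            - K*(1+x^2)*(u k)^2 + K*x^2*(1+x^2)*(u (k-1))^2)
          / (2*(x^2*τ (k-1))*(1+x^2)) := by
      rw [← hvk]
      simp only [b0, b1]
      rw [hτk, ← hx2]
      field_simp
      ring
    linarith [div_nonneg hnum hden.le, hdiff.le, hdiff.ge]
  -- reverse bound: τ_k v_k² controlled by u²/τ
  have hGk : ∀ k, 2 ≤ k → k ≤ N →
      τ k * (v k)^2 ≤ 8*((u k)^2/τ k) + 2*ruser^3*((u (k-1))^2/τ (k-1)) := by
    intro k h2 hkN
    have hvk := u_rec k h2 hkN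
    have hT : 0 < τ (k-1) := hτ (k-1) (by omega) (by omega)
    have hr0 : 0 < ratio τ k := hrpos k h2 hkN
    have hrR : ratio τ k ≤ ruser := hrle k h2 hkN
    have hτk : τ k = ratio τ k * τ (k-1) := hτeq k h2 hkN
    set x := Real.sqrt (ratio τ k) with hxdef
    have hx2 : x^2 = ratio τ k := Real.sq_sqrt hr0.le
    have hx0 : 0 < x := Real.sqrt_pos.2 hr0
    have e1 : ((1+2*x^2)*(u k) - x^4*(u (k-1)))^2
        ≤ 2*(1+2*x^2)^2*(u k)^2 + 2*x^8*(u (k-1))^2 := by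
      linarith [sq_nonneg ((1+2*x^2)*(u k) + x^4*(u (k-1)))]
    have e2 : 2*(1+2*x^2)^2*(u k)^2 ≤ 8*(1+x^2)^2*(u k)^2 := by
      linarith [sq_nonneg (x*(u k)), sq_nonneg (u k)]
    have h6 : x^6 ≤ ruser^3*(1+x^2)^2 := by
      have h61 : (x^2)^3 ≤ ruser^3 := by
        apply pow_le_pow_left₀ (sq_nonneg x)
        rw [hx2]; exact hrR
      linarith [mul_nonneg (pow_pos hruser_pos 3).le
        (by linarith [sq_nonneg x, sq_nonneg (x^2)] : (0:ℝ) ≤ (1+x^2)^2 - 1), h61,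
        sq_nonneg x]
    have e3 : 2*x^8*(u (k-1))^2 ≤ 2*ruser^3*x^2*(1+x^2)^2*(u (k-1))^2 := by
      linarith [mul_nonneg (sq_nonneg (x*(u (k-1)))) (sub_nonneg.2 h6)]
    have hnum2 : 0 ≤ 8*(u k)^2*(1+x^2)^2 + 2*ruser^3*x^2*(1+x^2)^2*(u (k-1))^2
        - ((1+2*x^2)*(u k) - x^4*(u (k-1)))^2 := by linarith [e1, e2, e3]
    have hden2 : (0:ℝ) < x^2*τ (k-1)*(1+x^2)^2 := by positivity
    have hdiff2 : (8*((u k)^2/τ k) + 2*ruser^3*((u (k-1))^2/τ (k-1))) - τ k * (v k)^2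
        = (8*(u k)^2*(1+x^2)^2 + 2*ruser^3*x^2*(1+x^2)^2*(u (k-1))^2
            - ((1+2*x^2)*(u k) - x^4*(u (k-1)))^2) / (x^2*τ (k-1)*(1+x^2)^2) := by
      rw [← hvk]
      simp only [b0, b1]
      rw [hτk, ← hx2]
      field_simp
      ring
    linarith [div_nonneg hnum2 hden2.le, hdiff2.le, hdiff2.ge]
  -- summed positive definiteness
  have hSV : m1 * (∑ k ∈ Finset.Icc 2 n, (u k)^2/τ k)
      ≤ ∑ k ∈ Finset.Icc 2 n, v k * u k := by
    have hsum := Finset.sum_le_sum (fun k hk =>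
      pd k (Finset.mem_Icc.mp hk).1 ((Finset.mem_Icc.mp hk).2.trans hnN))
    rw [Finset.sum_add_distrib] at hsum
    have htel : ∑ k ∈ Finset.Icc 2 n, (K/(2*τ k)*(u k)^2 - K/(2*τ (k-1))*(u (k-1))^2)
        = K/(2*τ (1+(n-1)))*(u (1+(n-1)))^2 - K/(2*τ (1+0))*(u (1+0))^2 := by
      rw [← Finset.Ico_add_one_right_eq_Icc, Finset.sum_Ico_eq_sum_range,
        show n+1-2 = n-1 by omega]
      have hcongr : ∀ i ∈ Finset.range (n-1),
          (K/(2*τ (2+i))*(u (2+i))^2 - K/(2*τ ((2+i)-1))*(u ((2+i)-1))^2)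
          = (fun j => K/(2*τ (1+j))*(u (1+j))^2) (i+1)
            - (fun j => K/(2*τ (1+j))*(u (1+j))^2) i := by
        intro i _
        simp only []
        rw [show (2+i)-1 = 1+i by omega, show 2+i = 1+(i+1) by omega]
      rw [Finset.sum_congr rfl hcongr,
        Finset.sum_range_sub (fun j => K/(2*τ (1+j))*(u (1+j))^2) (n-1)]
    rw [htel] at hsum
    have hn1 : 1+(n-1) = n := by omega
    rw [hn1] at hsum
    have hgn : 0 ≤ K/(2*τ n)*(u n)^2 :=
      mul_nonneg (div_nonneg hK0.le (by linarith [hτ n (by omega) hnN])) (sq_nonneg _)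
    have hg1 : K/(2*τ (1+0))*(u (1+0))^2 = 0 := by
      rw [show (1+0 : ℕ) = 1 from rfl, hu1]
      ring
    rw [hg1] at hsum
    rw [Finset.mul_sum]
    have hms : ∀ k ∈ Finset.Icc 2 n, m1 * ((u k)^2/τ k) = m1 * (u k)^2/τ k := by
      intro k _; ring
    rw [Finset.sum_congr rfl hms] at hsum
    have hms2 : ∀ k ∈ Finset.Icc 2 n, m1 * ((u k)^2/τ k) = m1 * (u k)^2/τ k := by
      intro k _; ring
    rw [Finset.sum_congr rfl hms2]
    linarith [hsum, hgn]
  -- summed reverse bound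
  have hshift : ∑ k ∈ Finset.Icc 2 n, (u (k-1))^2/τ (k-1)
      ≤ ∑ k ∈ Finset.Icc 2 n, (u k)^2/τ k := by
    have hL : ∑ k ∈ Finset.Icc 2 n, (u (k-1))^2/τ (k-1)
        = ∑ i ∈ Finset.range (n-1), (u (1+i))^2/τ (1+i) := by
      rw [← Finset.Ico_add_one_right_eq_Icc, Finset.sum_Ico_eq_sum_range, show n+1-2 = n-1 by omega]
      apply Finset.sum_congr rfl
      intro i _
      rw [show (2+i)-1 = 1+i by omega]
    have hR : ∑ k ∈ Finset.Icc 2 n, (u k)^2/τ k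
        = ∑ i ∈ Finset.range (n-1), (u (2+i))^2/τ (2+i) := by
      rw [← Finset.Ico_add_one_right_eq_Icc, Finset.sum_Ico_eq_sum_range, show n+1-2 = n-1 by omega]
    rw [hL, hR, show n-1 = (n-2)+1 by omega,
      Finset.sum_range_succ' (fun i => (u (1+i))^2/τ (1+i)) (n-2),
      Finset.sum_range_succ (fun i => (u (2+i))^2/τ (2+i)) (n-2)]
    have hg0 : (u (1+0))^2/τ (1+0) = 0 := by
      rw [show (1+0 : ℕ) = 1 from rfl, hu1]
      ring
    have hpt : ∀ i ∈ Finset.range (n-2),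
        (u (1+(i+1)))^2/τ (1+(i+1)) = (u (2+i))^2/τ (2+i) := by
      intro i _
      rw [show 1+(i+1) = 2+i by omega]
    rw [Finset.sum_congr rfl hpt, hg0]
    have hlast : 0 ≤ (u (2+(n-2)))^2/τ (2+(n-2)) :=
      div_nonneg (sq_nonneg _) (hτ _ (by omega) (by omega : 2+(n-2) ≤ N)).le
    linarith
  have hG : ∑ k ∈ Finset.Icc 2 n, τ k * (v k)^2
      ≤ C2 * ∑ k ∈ Finset.Icc 2 n, (u k)^2/τ k := by
    have h1 := Finset.sum_le_sum (fun k hk =>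
      hGk k (Finset.mem_Icc.mp hk).1 ((Finset.mem_Icc.mp hk).2.trans hnN))
    rw [Finset.sum_add_distrib] at h1
    rw [← Finset.mul_sum, ← Finset.mul_sum] at h1
    have h4 : 2*ruser^3 * (∑ k ∈ Finset.Icc 2 n, (u (k-1))^2/τ (k-1))
        ≤ 2*ruser^3 * (∑ k ∈ Finset.Icc 2 n, (u k)^2/τ k) :=
      mul_le_mul_of_nonneg_left hshift (by positivity)
    have hC2e : C2 * (∑ k ∈ Finset.Icc 2 n, (u k)^2/τ k)
        = 8*(∑ k ∈ Finset.Icc 2 n, (u k)^2/τ k)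
          + 2*ruser^3*(∑ k ∈ Finset.Icc 2 n, (u k)^2/τ k) := by
      rw [hC2def]; ring
    linarith [h1, h4]
  -- explicit form of ρ
  have hρval : ∀ i, 2 ≤ i → i+1 ≤ N →
      ρ i = ratio τ (i+1) * (1+ratio τ i)/((1+ratio τ (i+1))*(1+2*ratio τ i)) := by
    intro i h2 hN1
    have hri : 0 < ratio τ i := hrpos i h2 (by omega)
    have hri1 : 0 < ratio τ (i+1) := hrpos (i+1) (by omega) hN1
    have hτi : 0 < τ i := hτ i (by omega) (by omega)
    have hτi1eq : τ (i+1) = ratio τ (i+1) * τ i := by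
      have h := hτeq (i+1) (by omega) hN1
      rwa [show i+1-1 = i by omega] at h
    have ne1 : τ i ≠ 0 := hτi.ne'
    have ne2 : (1:ℝ)+ratio τ i ≠ 0 := by linarith
    have ne3 : (1:ℝ)+ratio τ (i+1) ≠ 0 := by linarith
    have ne4 : (1:ℝ)+2*ratio τ i ≠ 0 := by linarith
    have ne5 : ratio τ (i+1) ≠ 0 := hri1.ne'
    rw [hρdef i, b1, b0, hτi1eq]
    field_simp
  -- geometric decay of the DOC kernels
  have theta_le : ∀ d j, 2 ≤ j → j + d ≤ N →
      θ (j+d) j ≤ Real.sqrt (τ (j+d)) * Real.sqrt (τ j)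
        * ((1+ratio τ j)/(1+2*ratio τ j)) * q^d := by
    intro d
    induction d with
    | zero =>
      intro j h2 hjN
      have hτj : 0 < τ j := hτ j (by omega) (by omega)
      have hrj : 0 < ratio τ j := hrpos j h2 (by omega)
      rw [show j+0 = j from rfl, hθd j h2, pow_zero, b0, one_div_div]
      apply le_of_eq
      rw [Real.mul_self_sqrt hτj.le]
      ring
    | succ d ih =>
      intro j h2 hjN
      have hstep := theta_step (j+(d+1)) j h2 (by omega)
      have hih := ih (j+1) (by omega) (by omega : (j+1)+d ≤ N)
      rw [show j+1+d = j+(d+1) by omega] at hih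
      have hρnn : 0 ≤ ρ j := hρ0 j h2 (by omega)
      have hrj : 0 < ratio τ j := hrpos j h2 (by omega)
      have hrj1 : 0 < ratio τ (j+1) := hrpos (j+1) (by omega) (by omega)
      have hrjR : ratio τ j ≤ ruser := hrle j h2 (by omega)
      have hrj1R : ratio τ (j+1) ≤ ruser := hrle (j+1) (by omega) (by omega)
      have hτj : 0 < τ j := hτ j (by omega) (by omega)
      have hτj1eq : τ (j+1) = ratio τ (j+1) * τ j := by
        have h := hτeq (j+1) (by omega) (by omega)
        rwa [show j+1-1 = j by omega] at h
      set y := Real.sqrt (ratio τ (j+1)) with hydef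
      have hy2 : y^2 = ratio τ (j+1) := Real.sq_sqrt hrj1.le
      have hy0 : 0 < y := Real.sqrt_pos.2 hrj1
      have hyz : y ≤ z := by
        rw [hydef, hzdef]; exact Real.sqrt_le_sqrt hrj1R
      have hsq : Real.sqrt (τ (j+1)) = y * Real.sqrt (τ j) := by
        rw [hτj1eq, Real.sqrt_mul hrj1.le, hydef]
      have hkey : ρ j * (Real.sqrt (τ (j+1)) * ((1+ratio τ (j+1))/(1+2*ratio τ (j+1))))
          ≤ q * (Real.sqrt (τ j) * ((1+ratio τ j)/(1+2*ratio τ j))) := by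
        rw [hρval j h2 (by omega), hsq, ← hy2, hqdef, ← hz2]
        exact key_step hrj hy0 hyz (Real.sqrt_nonneg _)
      have hmul := mul_le_mul_of_nonneg_left hkey
        (mul_nonneg (Real.sqrt_nonneg (τ (j+(d+1)))) (pow_nonneg hq0.le d))
      calc θ (j+(d+1)) j = ρ j * θ (j+(d+1)) (j+1) := hstep
        _ ≤ ρ j * (Real.sqrt (τ (j+(d+1))) * Real.sqrt (τ (j+1))
              * ((1+ratio τ (j+1))/(1+2*ratio τ (j+1))) * q^d) :=
            mul_le_mul_of_nonneg_left hih hρnn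
        _ = (Real.sqrt (τ (j+(d+1))) * q^d)
              * (ρ j * (Real.sqrt (τ (j+1)) * ((1+ratio τ (j+1))/(1+2*ratio τ (j+1))))) := by
            ring
        _ ≤ (Real.sqrt (τ (j+(d+1))) * q^d)
              * (q * (Real.sqrt (τ j) * ((1+ratio τ j)/(1+2*ratio τ j)))) := hmul
        _ = Real.sqrt (τ (j+(d+1))) * Real.sqrt (τ j)
              * ((1+ratio τ j)/(1+2*ratio τ j)) * q^(d+1) := by
            ring
  have theta_le' : ∀ k j, 2 ≤ j → j ≤ k → k ≤ N →
      θ k j ≤ Real.sqrt (τ k) * Real.sqrt (τ j) * q^(k-j) := by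
    intro k j h2 hjk hkN
    have h := theta_le (k-j) j h2 (by omega : j+(k-j) ≤ N)
    rw [show j+(k-j) = k by omega] at h
    have hrj : 0 < ratio τ j := hrpos j h2 (by omega)
    have he1 : (1+ratio τ j)/(1+2*ratio τ j) ≤ 1 := by
      rw [div_le_one (by linarith)]
      linarith
    calc θ k j ≤ Real.sqrt (τ k) * Real.sqrt (τ j)
          * ((1+ratio τ j)/(1+2*ratio τ j)) * q^(k-j) := h
      _ ≤ Real.sqrt (τ k) * Real.sqrt (τ j) * 1 * q^(k-j) := by
          apply mul_le_mul_of_nonneg_right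
            (mul_le_mul_of_nonneg_left he1
              (mul_nonneg (Real.sqrt_nonneg _) (Real.sqrt_nonneg _)))
            (pow_nonneg hq0.le _)
      _ = Real.sqrt (τ k) * Real.sqrt (τ j) * q^(k-j) := by ring
  -- geometric sums
  have hgeom1 : ∀ k, 2 ≤ k → (∑ j ∈ Finset.Icc 2 k, q^(k-j)) ≤ 1/(1-q) := by
    intro k h2
    rw [← Finset.Ico_add_one_right_eq_Icc, Finset.sum_Ico_eq_sum_range, show k+1-2 = k-1 by omega]
    have hc : ∀ i ∈ Finset.range (k-1), q^(k-(2+i)) = (fun i => q^i) (k-1-1-i) := by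
      intro i _
      simp only []
      congr 1
      omega
    rw [Finset.sum_congr rfl hc, Finset.sum_range_reflect (fun i => q^i) (k-1)]
    exact geom_tail_le hq0.le hq1 _
  have hgeom2 : ∀ j, 2 ≤ j → j ≤ n → (∑ k ∈ Finset.Icc j n, q^(k-j)) ≤ 1/(1-q) := by
    intro j h2 hjn
    rw [← Finset.Ico_add_one_right_eq_Icc, Finset.sum_Ico_eq_sum_range]
    have hc : ∀ i ∈ Finset.range (n+1-j), q^((j+i)-j) = q^i := by
      intro i _
      congr 1
      omega
    rw [Finset.sum_congr rfl hc]
    exact geom_tail_le hq0.le hq1 _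
  -- final assembly
  set δ := ε * m0 * (1-q) with hδdef
  have hδ0 : 0 < δ := by
    rw [hδdef]; exact mul_pos (mul_pos hε hm00) (by linarith)
  have step1 : ∀ k ∈ Finset.Icc 2 n, ∀ j ∈ Finset.Icc 2 k,
      θ k j * w k * v j
        ≤ q^(k-j) * (δ*(Real.sqrt (τ j)*|v j|)^2 + (Real.sqrt (τ k)*|w k|)^2/(4*δ)) := by
    intro k hk j hj
    obtain ⟨hk2, hkn⟩ := Finset.mem_Icc.mp hk
    obtain ⟨hj2, hjk⟩ := Finset.mem_Icc.mp hj
    have hkN : k ≤ N := hkn.trans hnN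
    have hθnn := theta_nonneg k j hj2 hjk hkN
    have hθb := theta_le' k j hj2 hjk hkN
    have h1 : θ k j * w k * v j ≤ θ k j * (|w k| * |v j|) := by
      have habs : w k * v j ≤ |w k| * |v j| := by
        calc w k * v j ≤ |w k * v j| := le_abs_self _
          _ = |w k| * |v j| := abs_mul _ _
      calc θ k j * w k * v j = θ k j * (w k * v j) := by ring
        _ ≤ θ k j * (|w k| * |v j|) := mul_le_mul_of_nonneg_left habs hθnn
    have h2 : θ k j * (|w k| * |v j|)
        ≤ (Real.sqrt (τ k) * Real.sqrt (τ j) * q^(k-j)) * (|w k| * |v j|) :=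
      mul_le_mul_of_nonneg_right hθb (mul_nonneg (abs_nonneg _) (abs_nonneg _))
    have h4 : (Real.sqrt (τ k)*|w k|) * (Real.sqrt (τ j)*|v j|)
        ≤ δ*(Real.sqrt (τ j)*|v j|)^2 + (Real.sqrt (τ k)*|w k|)^2/(4*δ) := by
      have hsq := sq_nonneg (2*δ*(Real.sqrt (τ j)*|v j|) - (Real.sqrt (τ k)*|w k|))
      have h4δ : (0:ℝ) < 4*δ := by linarith
      have key : δ*(Real.sqrt (τ j)*|v j|)^2 + (Real.sqrt (τ k)*|w k|)^2/(4*δ)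
          - (Real.sqrt (τ k)*|w k|) * (Real.sqrt (τ j)*|v j|)
          = (2*δ*(Real.sqrt (τ j)*|v j|) - (Real.sqrt (τ k)*|w k|))^2/(4*δ) := by
        field_simp
        ring
      linarith [div_nonneg hsq h4δ.le, key.le, key.ge]
    calc θ k j * w k * v j ≤ θ k j * (|w k| * |v j|) := h1
      _ ≤ (Real.sqrt (τ k) * Real.sqrt (τ j) * q^(k-j)) * (|w k| * |v j|) := h2
      _ = q^(k-j) * ((Real.sqrt (τ k)*|w k|) * (Real.sqrt (τ j)*|v j|)) := by ring
      _ ≤ q^(k-j) * (δ*(Real.sqrt (τ j)*|v j|)^2 + (Real.sqrt (τ k)*|w k|)^2/(4*δ)) :=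
          mul_le_mul_of_nonneg_left h4 (pow_nonneg hq0.le _)
  have main1 : (∑ k ∈ Finset.Icc 2 n, ∑ j ∈ Finset.Icc 2 k, θ k j * w k * v j)
      ≤ ∑ k ∈ Finset.Icc 2 n, ∑ j ∈ Finset.Icc 2 k,
          q^(k-j) * (δ*(Real.sqrt (τ j)*|v j|)^2 + (Real.sqrt (τ k)*|w k|)^2/(4*δ)) :=
    Finset.sum_le_sum (fun k hk => Finset.sum_le_sum (fun j hj => step1 k hk j hj))
  have hsplitsum : ∑ k ∈ Finset.Icc 2 n, ∑ j ∈ Finset.Icc 2 k,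
      q^(k-j) * (δ*(Real.sqrt (τ j)*|v j|)^2 + (Real.sqrt (τ k)*|w k|)^2/(4*δ))
      = δ * (∑ k ∈ Finset.Icc 2 n, ∑ j ∈ Finset.Icc 2 k,
            q^(k-j)*(Real.sqrt (τ j)*|v j|)^2)
        + (1/(4*δ)) * (∑ k ∈ Finset.Icc 2 n,
            (Real.sqrt (τ k)*|w k|)^2 * ∑ j ∈ Finset.Icc 2 k, q^(k-j)) := by
    rw [Finset.mul_sum, Finset.mul_sum, ← Finset.sum_add_distrib]
    apply Finset.sum_congr rfl
    intro k _
    rw [Finset.mul_sum, Finset.mul_sum, Finset.mul_sum, ← Finset.sum_add_distrib]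
    apply Finset.sum_congr rfl
    intro j _
    ring
  have hXpart : (∑ k ∈ Finset.Icc 2 n, ∑ j ∈ Finset.Icc 2 k,
      q^(k-j)*(Real.sqrt (τ j)*|v j|)^2)
      ≤ (1/(1-q)) * ∑ j ∈ Finset.Icc 2 n, τ j * v j ^ 2 := by
    rw [sum_triangle_comm n (fun k j => q^(k-j)*(Real.sqrt (τ j)*|v j|)^2),
      Finset.mul_sum]
    apply Finset.sum_le_sum
    intro j hj
    obtain ⟨hj2, hjn⟩ := Finset.mem_Icc.mp hj
    have hτj : 0 < τ j := hτ j (by omega) (by omega)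
    have hXj : (Real.sqrt (τ j)*|v j|)^2 = τ j * v j ^ 2 := by
      rw [mul_pow, Real.sq_sqrt hτj.le, sq_abs]
    calc ∑ k ∈ Finset.Icc j n, q^(k-j)*(Real.sqrt (τ j)*|v j|)^2
        = (∑ k ∈ Finset.Icc j n, q^(k-j)) * (Real.sqrt (τ j)*|v j|)^2 := by
          rw [Finset.sum_mul]
      _ ≤ (1/(1-q)) * (Real.sqrt (τ j)*|v j|)^2 :=
          mul_le_mul_of_nonneg_right (hgeom2 j hj2 hjn) (sq_nonneg _)
      _ = (1/(1-q)) * (τ j * v j ^ 2) := by rw [hXj]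
  have hYpart : (∑ k ∈ Finset.Icc 2 n,
      (Real.sqrt (τ k)*|w k|)^2 * ∑ j ∈ Finset.Icc 2 k, q^(k-j))
      ≤ (1/(1-q)) * ∑ k ∈ Finset.Icc 2 n, τ k * w k ^ 2 := by
    rw [Finset.mul_sum]
    apply Finset.sum_le_sum
    intro k hk
    obtain ⟨hk2, hkn⟩ := Finset.mem_Icc.mp hk
    have hτk : 0 < τ k := hτ k (by omega) (by omega)
    have hYk : (Real.sqrt (τ k)*|w k|)^2 = τ k * w k ^ 2 := by
      rw [mul_pow, Real.sq_sqrt hτk.le, sq_abs]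
    calc (Real.sqrt (τ k)*|w k|)^2 * (∑ j ∈ Finset.Icc 2 k, q^(k-j))
        ≤ (Real.sqrt (τ k)*|w k|)^2 * (1/(1-q)) :=
          mul_le_mul_of_nonneg_left (hgeom1 k hk2) (sq_nonneg _)
      _ = (1/(1-q)) * (τ k * w k ^ 2) := by rw [hYk]; ring
  have hquad : ∑ k ∈ Finset.Icc 2 n, ∑ j ∈ Finset.Icc 2 k, θ k j * v k * v j
      = ∑ k ∈ Finset.Icc 2 n, v k * u k := by
    apply Finset.sum_congr rfl
    intro k _
    rw [hudef k, Finset.mul_sum]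
    apply Finset.sum_congr rfl
    intro j _
    ring
  have hm0v : m0 * (∑ k ∈ Finset.Icc 2 n, τ k * v k ^ 2)
      ≤ ∑ k ∈ Finset.Icc 2 n, v k * u k := by
    have hGG : ∑ k ∈ Finset.Icc 2 n, τ k * v k ^ 2
        ≤ C2 * ∑ k ∈ Finset.Icc 2 n, (u k)^2/τ k := hG
    have h1 : m0 * (∑ k ∈ Finset.Icc 2 n, τ k * v k ^ 2)
        ≤ m0 * (C2 * ∑ k ∈ Finset.Icc 2 n, (u k)^2/τ k) :=
      mul_le_mul_of_nonneg_left hGG hm00.le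
    have h2 : m0 * (C2 * ∑ k ∈ Finset.Icc 2 n, (u k)^2/τ k)
        = m1 * ∑ k ∈ Finset.Icc 2 n, (u k)^2/τ k := by
      rw [hm0def]
      field_simp
    linarith [hSV]
  have hδA : δ * (∑ k ∈ Finset.Icc 2 n, ∑ j ∈ Finset.Icc 2 k,
      q^(k-j)*(Real.sqrt (τ j)*|v j|)^2)
      ≤ ε * ∑ k ∈ Finset.Icc 2 n, ∑ j ∈ Finset.Icc 2 k, θ k j * v k * v j := by
    have h1 := mul_le_mul_of_nonneg_left hXpart hδ0.le
    have h2 : δ * ((1/(1-q)) * ∑ j ∈ Finset.Icc 2 n, τ j * v j ^ 2)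
        = ε * (m0 * ∑ j ∈ Finset.Icc 2 n, τ j * v j ^ 2) := by
      have hcan : (1-q) * (1/(1-q)) = 1 :=
        mul_one_div_cancel (by linarith : (1:ℝ)-q ≠ 0)
      calc δ * ((1/(1-q)) * ∑ j ∈ Finset.Icc 2 n, τ j * v j ^ 2)
          = (ε * m0 * ∑ j ∈ Finset.Icc 2 n, τ j * v j ^ 2) * ((1-q) * (1/(1-q))) := by
            rw [hδdef]; ring
        _ = ε * (m0 * ∑ j ∈ Finset.Icc 2 n, τ j * v j ^ 2) := by rw [hcan]; ring
    have h3 := mul_le_mul_of_nonneg_left hm0v hε.le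
    rw [hquad]
    linarith
  have hδB : (1/(4*δ)) * (∑ k ∈ Finset.Icc 2 n,
      (Real.sqrt (τ k)*|w k|)^2 * ∑ j ∈ Finset.Icc 2 k, q^(k-j))
      ≤ (1/(2*m0*(1-q)^2))/(2*ε) * ∑ k ∈ Finset.Icc 2 n, τ k * w k ^ 2 := by
    have h1 := mul_le_mul_of_nonneg_left hYpart
      (le_of_lt (one_div_pos.2 (by linarith : (0:ℝ) < 4*δ)))
    have hne1 : (1:ℝ) - q ≠ 0 := by linarith
    have hco : (1/(4*δ)) * (1/(1-q)) = (1/(2*m0*(1-q)^2))/(2*ε) := by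
      rw [hδdef]
      field_simp
      ring
    have h2 : (1/(4*δ)) * ((1/(1-q)) * ∑ k ∈ Finset.Icc 2 n, τ k * w k ^ 2)
        = (1/(2*m0*(1-q)^2))/(2*ε) * ∑ k ∈ Finset.Icc 2 n, τ k * w k ^ 2 := by
      calc (1/(4*δ)) * ((1/(1-q)) * ∑ k ∈ Finset.Icc 2 n, τ k * w k ^ 2)
          = ((1/(4*δ)) * (1/(1-q))) * ∑ k ∈ Finset.Icc 2 n, τ k * w k ^ 2 := by ring
        _ = (1/(2*m0*(1-q)^2))/(2*ε) * ∑ k ∈ Finset.Icc 2 n, τ k * w k ^ 2 := by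
            rw [hco]
    linarith
  linarith [main1, hsplitsum.le, hsplitsum.ge, hδA, hδB]
end

section
/- For every r_user with 0 < r_user < r_* (r_* ≈ 4.864 the positive root of 1+2r−r^{3/2}=0) there exists a constant c > 0, depending only on r_user, with the following property: for every N ≥ 2, every family of positive step sizes τ_1,…,τ_N whose step ratios satisfy 0 < r_k ≤ r_user for 2 ≤ k ≤ N, every n with 2 ≤ n ≤ N, every ε > 0, and all real sequences v_2,…,v_n and w_2,…,w_n, the embedding-type convolution inequality holds: Σ_{k=2}^{n} Σ_{j=2}^{k} θ_{k-j}^{(k)} w_k v_j ≤ ε Σ_{k=2}^{n} τ_k v_k² + (c/ε) Σ_{k=2}^{n} τ_k w_k². -/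
/-- Geometric sum bound. -/
lemma doc_geom_le (m : ℝ) (h0 : 0 ≤ m) (h1 : m < 1) (N : ℕ) :
    ∑ i ∈ Finset.range N, m ^ i ≤ 1 / (1 - m) := by
  have h : 0 < 1 - m := by linarith
  rw [geom_sum_eq (by linarith : m ≠ 1)]
  have h2 : (m ^ N - 1) / (m - 1) = (1 - m ^ N) / (1 - m) := by
    rw [div_eq_div_iff (by linarith) (by linarith)]; ring
  rw [h2, div_le_div_iff₀ h h]
  have : 0 ≤ m ^ N := pow_nonneg h0 N
  nlinarith

/-- AM–GM with weights. -/
lemma doc_amgm (x y vj wk e : ℝ) (hx : 0 < x) (hy : 0 < y) (he : 0 < e) :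
    Real.sqrt (x * y) * |wk * vj| ≤ e * (x * vj ^ 2) + 1 / (4 * e) * (y * wk ^ 2) := by
  have hA2 : (Real.sqrt x * |vj|) ^ 2 = x * vj ^ 2 := by
    rw [mul_pow, Real.sq_sqrt hx.le, sq_abs]
  have hB2 : (Real.sqrt y * |wk|) ^ 2 = y * wk ^ 2 := by
    rw [mul_pow, Real.sq_sqrt hy.le, sq_abs]
  set A := Real.sqrt x * |vj|
  set B := Real.sqrt y * |wk|
  have h1 : Real.sqrt (x * y) * |wk * vj| = A * B := by
    rw [Real.sqrt_mul hx.le, abs_mul]; ring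
  rw [h1, ← hA2, ← hB2]
  have h2 : e * A ^ 2 + 1 / (4 * e) * B ^ 2 - A * B = (2 * e * A - B) ^ 2 / (4 * e) := by
    field_simp; ring
  nlinarith [div_nonneg (sq_nonneg (2 * e * A - B)) (by linarith : (0 : ℝ) ≤ 4 * e)]

/-- The key one-step estimate for the DOC kernel recursion. -/
lemma doc_step (r r' R : ℝ) (hr : 0 < r) (hrR : r ≤ R) (hr' : 0 < r') (hr'R : r' ≤ R) :
    Real.sqrt r' * ((1 + r') / (1 + 2 * r')) * (r' * (1 + r) / ((1 + r') * (1 + 2 * r)))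
      ≤ Real.sqrt (R ^ 3) / (1 + 2 * R) * ((1 + r) / (1 + 2 * r)) := by
  have hR : 0 < R := lt_of_lt_of_le hr hrR
  have h3 : Real.sqrt (r' ^ 3) = r' * Real.sqrt r' := by
    rw [show r' ^ 3 = r' ^ 2 * r' by ring, Real.sqrt_mul (sq_nonneg r'), Real.sqrt_sq hr'.le]
  have hL : Real.sqrt r' * ((1 + r') / (1 + 2 * r')) * (r' * (1 + r) / ((1 + r') * (1 + 2 * r)))
      = Real.sqrt (r' ^ 3) / (1 + 2 * r') * ((1 + r) / (1 + 2 * r)) := by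
    rw [h3]; field_simp
  rw [hL]
  apply mul_le_mul_of_nonneg_right _ (by positivity)
  rw [div_le_div_iff₀ (by linarith) (by linarith)]
  have e1 : r' ^ 3 ≤ R ^ 3 := pow_le_pow_left₀ hr'.le hr'R 3
  have e2 : r' ^ 3 * R ≤ r' * R ^ 3 := by
    nlinarith [mul_nonneg (mul_pos hr' hR).le (sub_nonneg.2 hr'R),
      mul_nonneg (mul_nonneg (mul_pos hr' hR).le (sub_nonneg.2 hr'R))
        (by linarith : (0 : ℝ) ≤ r' + R)]
  have e3 : r' ^ 3 * R ^ 2 ≤ r' ^ 2 * R ^ 3 := by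
    nlinarith [mul_nonneg (mul_nonneg (sq_nonneg r') (sq_nonneg R)) (sub_nonneg.2 hr'R)]
  have key : r' ^ 3 * (1 + 2 * R) ^ 2 ≤ R ^ 3 * (1 + 2 * r') ^ 2 := by nlinarith
  calc Real.sqrt (r' ^ 3) * (1 + 2 * R) = Real.sqrt (r' ^ 3 * (1 + 2 * R) ^ 2) := by
        rw [Real.sqrt_mul (by positivity), Real.sqrt_sq (by positivity)]
    _ ≤ Real.sqrt (R ^ 3 * (1 + 2 * r') ^ 2) := Real.sqrt_le_sqrt key
    _ = Real.sqrt (R ^ 3) * (1 + 2 * r') := by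
        rw [Real.sqrt_mul (by positivity), Real.sqrt_sq (by positivity)]

theorem doc_embedding_type_convolution_inequality
    (ruser rstar : ℝ) (hruser_pos : 0 < ruser)
    (hrstar_pos : 0 < rstar)
    (hrstar_root : 1 + 2 * rstar - rstar ^ ((3 : ℝ) / 2) = 0)
    (hru : ruser < rstar) :
    ∃ c : ℝ, 0 < c ∧
      ∀ (N : ℕ), 2 ≤ N → ∀ τ : ℕ → ℝ,
        (∀ k, 1 ≤ k → k ≤ N → 0 < τ k) →
        (∀ k, 2 ≤ k → k ≤ N → 0 < ratio τ k ∧ ratio τ k ≤ ruser) →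
        ∀ θ : ℕ → ℕ → ℝ,
        (∀ n, 2 ≤ n → θ n n = 1 / b0 τ n) →
        (∀ n k, 2 ≤ k → k < n →
          θ n k = -(1 / b0 τ k) * ∑ j ∈ Finset.Icc (k + 1) n, θ n j * bker τ (j - k) j) →
        ∀ n, 2 ≤ n → n ≤ N → ∀ ε : ℝ, 0 < ε → ∀ v w : ℕ → ℝ,
          ∑ k ∈ Finset.Icc 2 n, ∑ j ∈ Finset.Icc 2 k, θ k j * w k * v j
            ≤ ε * ∑ k ∈ Finset.Icc 2 n, τ k * v k ^ 2
              + c / ε * ∑ k ∈ Finset.Icc 2 n, τ k * w k ^ 2 := by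
  -- the contraction factor m = √(ruser³)/(1+2 ruser) < 1
  have h32 : rstar ^ ((3 : ℝ) / 2) = 1 + 2 * rstar := by linarith
  have hcube : rstar ^ 3 = (1 + 2 * rstar) ^ 2 := by
    have h1 : (rstar ^ ((3 : ℝ) / 2)) ^ (2 : ℕ) = rstar ^ (3 : ℕ) := by
      rw [← Real.rpow_natCast (rstar ^ ((3 : ℝ) / 2)) 2, ← Real.rpow_mul hrstar_pos.le]
      norm_num
    rw [h32] at h1
    linarith [h1]
  have hR4 : 4 < rstar := by nlinarith [sq_nonneg rstar, mul_pos hrstar_pos hrstar_pos]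
  have hq0 : 0 < rstar ^ 2 - 4 * rstar - 4 := by nlinarith
  have hq : 0 < ruser ^ 2 + ruser * rstar + rstar ^ 2 - 4 * ruser - 4 * rstar - 4 := by nlinarith
  have hkey : ruser ^ 3 < (1 + 2 * ruser) ^ 2 := by nlinarith [mul_pos (sub_pos.2 hru) hq]
  set m : ℝ := Real.sqrt (ruser ^ 3) / (1 + 2 * ruser) with hm
  have hden : (0 : ℝ) < 1 + 2 * ruser := by linarith
  have hm0 : 0 ≤ m := by positivity
  have hm1 : m < 1 := by
    rw [hm, div_lt_one hden]
    calc Real.sqrt (ruser ^ 3) < Real.sqrt ((1 + 2 * ruser) ^ 2) :=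
          Real.sqrt_lt_sqrt (by positivity) hkey
      _ = 1 + 2 * ruser := Real.sqrt_sq (by positivity)
  have h1m : (0 : ℝ) < 1 - m := by linarith
  refine ⟨1 / (4 * (1 - m) ^ 2), by positivity, ?_⟩
  intro N hN τ hτ hratio θ hθdiag hθrec n hn hnN ε hε v w
  -- Step 1: the kernel bound by induction on the distance d = k - j.
  have key : ∀ d k j, 2 ≤ j → 2 ≤ k → k ≤ N → j + d = k →
      0 ≤ θ k j ∧ θ k j ≤ Real.sqrt (τ j * τ k) * m ^ d
        * ((1 + ratio τ j) / (1 + 2 * ratio τ j)) := by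
    intro d
    induction d with
    | zero =>
      intro k j hj hk hkN hjd
      have hjk : j = k := by omega
      subst hjk
      have hr := hratio j hk hkN
      have hτk := hτ j (by omega) hkN
      have hb : 1 / b0 τ j = τ j * ((1 + ratio τ j) / (1 + 2 * ratio τ j)) := by
        unfold b0
        rw [one_div_div]
        field_simp
      rw [hθdiag j hk, hb]
      constructor
      · exact le_of_lt (mul_pos hτk (div_pos (by linarith [hr.1] : (0:ℝ) < 1 + ratio τ j)
          (by linarith [hr.1] : (0:ℝ) < 1 + 2 * ratio τ j)))
      · rw [Real.sqrt_mul_self hτk.le, pow_zero]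
        nlinarith [mul_pos hτk (div_pos (by linarith : (0:ℝ) < 1 + ratio τ j)
          (by linarith : (0:ℝ) < 1 + 2 * ratio τ j))]
    | succ d ih =>
      intro k j hj hk hkN hjd
      have hjk : j < k := by omega
      have hjN : j ≤ N := by omega
      have hj1N : j + 1 ≤ N := by omega
      have hrj := hratio j hj hjN
      have hrj1 := hratio (j + 1) (by omega) hj1N
      have hτj := hτ j (by omega) hjN
      have hτj1 := hτ (j + 1) (by omega) hj1N
      have hτk := hτ k (by omega) hkN
      obtain ⟨ih0, ih1⟩ := ih k (j + 1) (by omega) hk hkN (by omega)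
      set r := ratio τ j with hrdef
      set r' := ratio τ (j + 1) with hr'def
      have hτ1eq : τ (j + 1) = r' * τ j := by
        rw [hr'def]
        unfold ratio
        rw [Nat.add_sub_cancel]
        field_simp
      have hsum : ∑ i ∈ Finset.Icc (j + 1) k, θ k i * bker τ (i - j) i
          = θ k (j + 1) * bker τ 1 (j + 1) := by
        rw [Finset.sum_eq_single (j + 1)]
        · rw [Nat.add_sub_cancel_left]
        · intro b hb hbne
          have hb2 : 2 ≤ b - j := by
            simp only [Finset.mem_Icc] at hb; omega
          have hzero : bker τ (b - j) b = 0 := by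
            unfold bker
            rw [if_neg (by omega), if_neg (by omega)]
          rw [hzero, mul_zero]
        · intro habs
          exact absurd (Finset.mem_Icc.2 ⟨le_refl _, hjk⟩) habs
      have hb1 : bker τ 1 (j + 1) = -(r' ^ 2) / (τ (j + 1) * (1 + r')) := by
        unfold bker b1
        norm_num; rw [hr'def]
      have hF : θ k j = θ k (j + 1) * (r' * (1 + r) / ((1 + r') * (1 + 2 * r))) := by
        rw [hθrec k j hj hjk, hsum, hb1]
        unfold b0
        rw [← hrdef, hτ1eq]
        have h1 : (0:ℝ) < 1 + r := by linarith [hrj.1]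
        have h2 : (0:ℝ) < 1 + 2 * r := by linarith [hrj.1]
        have h3 : (0:ℝ) < 1 + r' := by linarith [hrj1.1]
        have h4 : (0:ℝ) < r' := hrj1.1
        field_simp
      have hFpos : 0 ≤ r' * (1 + r) / ((1 + r') * (1 + 2 * r)) := by
        have h1 : (0:ℝ) < 1 + r := by linarith [hrj.1]
        have h2 : (0:ℝ) < 1 + 2 * r := by linarith [hrj.1]
        have h3 : (0:ℝ) < 1 + r' := by linarith [hrj1.1]
        exact le_of_lt (div_pos (mul_pos hrj1.1 h1) (mul_pos h3 h2))
      constructor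
      · rw [hF]; exact mul_nonneg ih0 hFpos
      · rw [hF]
        calc θ k (j + 1) * (r' * (1 + r) / ((1 + r') * (1 + 2 * r)))
            ≤ (Real.sqrt (τ (j + 1) * τ k) * m ^ d * ((1 + r') / (1 + 2 * r')))
              * (r' * (1 + r) / ((1 + r') * (1 + 2 * r))) :=
              mul_le_mul_of_nonneg_right ih1 hFpos
          _ ≤ Real.sqrt (τ j * τ k) * m ^ (d + 1) * ((1 + r) / (1 + 2 * r)) := by
              have hsq : Real.sqrt (τ (j + 1) * τ k) =
                  Real.sqrt r' * Real.sqrt (τ j * τ k) := by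
                rw [hτ1eq, show r' * τ j * τ k = r' * (τ j * τ k) by ring,
                  Real.sqrt_mul hrj1.1.le]
              rw [hsq]
              have hstep := doc_step r r' ruser hrj.1 hrj.2 hrj1.1 hrj1.2
              have hmd : (0:ℝ) ≤ m ^ d := pow_nonneg hm0 d
              have hS : (0:ℝ) ≤ Real.sqrt (τ j * τ k) := Real.sqrt_nonneg _
              calc Real.sqrt r' * Real.sqrt (τ j * τ k) * m ^ d * ((1 + r') / (1 + 2 * r'))
                  * (r' * (1 + r) / ((1 + r') * (1 + 2 * r)))
                  = (Real.sqrt (τ j * τ k) * m ^ d)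
                    * (Real.sqrt r' * ((1 + r') / (1 + 2 * r'))
                      * (r' * (1 + r) / ((1 + r') * (1 + 2 * r)))) := by ring
                _ ≤ (Real.sqrt (τ j * τ k) * m ^ d)
                    * (Real.sqrt (ruser ^ 3) / (1 + 2 * ruser) * ((1 + r) / (1 + 2 * r))) :=
                    mul_le_mul_of_nonneg_left hstep (mul_nonneg hS hmd)
                _ = Real.sqrt (τ j * τ k) * m ^ (d + 1) * ((1 + r) / (1 + 2 * r)) := by
                    rw [hm]; ring
  -- Step 2: per-term bound with the weight m^(k-j)
  set e : ℝ := ε * (1 - m) with he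
  have hepos : 0 < e := by positivity
  have hterm : ∀ k ∈ Finset.Icc 2 n, ∀ j ∈ Finset.Icc 2 k,
      θ k j * w k * v j ≤ m ^ (k - j) * (e * (τ j * v j ^ 2))
        + m ^ (k - j) * (1 / (4 * e) * (τ k * w k ^ 2)) := by
    intro k hk j hj
    simp only [Finset.mem_Icc] at hk hj
    have hkN : k ≤ N := le_trans hk.2 hnN
    have hjN : j ≤ N := le_trans hj.2 hkN
    have hτj := hτ j (by omega) hjN
    have hτk := hτ k (by omega) hkN
    have hrj := hratio j hj.1 hjN
    obtain ⟨hθ0, hθ1⟩ := key (k - j) k j hj.1 hk.1 hkN (by omega)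
    have hfrac : (1 + ratio τ j) / (1 + 2 * ratio τ j) ≤ 1 := by
      rw [div_le_one (by linarith [hrj.1])]; linarith [hrj.1]
    have hθ2 : θ k j ≤ Real.sqrt (τ j * τ k) * m ^ (k - j) := by
      calc θ k j ≤ Real.sqrt (τ j * τ k) * m ^ (k - j)
            * ((1 + ratio τ j) / (1 + 2 * ratio τ j)) := hθ1
        _ ≤ Real.sqrt (τ j * τ k) * m ^ (k - j) * 1 :=
            mul_le_mul_of_nonneg_left hfrac
              (mul_nonneg (Real.sqrt_nonneg _) (pow_nonneg hm0 _))
        _ = Real.sqrt (τ j * τ k) * m ^ (k - j) := mul_one _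
    have h1 : θ k j * w k * v j ≤ θ k j * |w k * v j| := by
      rw [mul_assoc]
      exact mul_le_mul_of_nonneg_left (le_abs_self _) hθ0
    have h2 : θ k j * |w k * v j| ≤ Real.sqrt (τ j * τ k) * m ^ (k - j) * |w k * v j| :=
      mul_le_mul_of_nonneg_right hθ2 (abs_nonneg _)
    have h3 := doc_amgm (τ j) (τ k) (v j) (w k) e hτj hτk hepos
    calc θ k j * w k * v j ≤ Real.sqrt (τ j * τ k) * m ^ (k - j) * |w k * v j| :=
          le_trans h1 h2
      _ = m ^ (k - j) * (Real.sqrt (τ j * τ k) * |w k * v j|) := by ring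
      _ ≤ m ^ (k - j) * (e * (τ j * v j ^ 2) + 1 / (4 * e) * (τ k * w k ^ 2)) :=
          mul_le_mul_of_nonneg_left h3 (pow_nonneg hm0 _)
      _ = m ^ (k - j) * (e * (τ j * v j ^ 2))
          + m ^ (k - j) * (1 / (4 * e) * (τ k * w k ^ 2)) := by ring
  -- Step 3: geometric sum bounds
  have hrow : ∀ k, ∑ j ∈ Finset.Icc 2 k, m ^ (k - j) ≤ 1 / (1 - m) := by
    intro k
    rcases Nat.lt_or_ge k 2 with hk | hk
    · rw [Finset.Icc_eq_empty (by omega)]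
      simp only [Finset.sum_empty]
      positivity
    · have : ∑ j ∈ Finset.Icc 2 k, m ^ (k - j) = ∑ i ∈ Finset.range (k - 1), m ^ i := by
        rw [← Finset.Ico_add_one_right_eq_Icc, Finset.sum_Ico_eq_sum_range,
          show k + 1 - 2 = k - 1 by omega, ← Finset.sum_range_reflect]
        exact Finset.sum_congr rfl fun i hi => by
          simp only [Finset.mem_range] at hi; congr 1; omega
      rw [this]
      exact doc_geom_le m hm0 hm1 _
  have hcol : ∀ j, ∑ k ∈ Finset.Icc j n, m ^ (k - j) ≤ 1 / (1 - m) := by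
    intro j
    have : ∑ k ∈ Finset.Icc j n, m ^ (k - j) = ∑ i ∈ Finset.range (n + 1 - j), m ^ i := by
      rw [← Finset.Ico_add_one_right_eq_Icc, Finset.sum_Ico_eq_sum_range]
      exact Finset.sum_congr rfl fun i _ => by congr 1; omega
    rw [this]
    exact doc_geom_le m hm0 hm1 _
  -- Step 4: assemble
  have hswap : ∑ k ∈ Finset.Icc 2 n, ∑ j ∈ Finset.Icc 2 k,
        m ^ (k - j) * (e * (τ j * v j ^ 2))
      = ∑ j ∈ Finset.Icc 2 n, ∑ k ∈ Finset.Icc j n,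
        m ^ (k - j) * (e * (τ j * v j ^ 2)) := by
    refine Finset.sum_comm' ?_
    intro k j
    simp only [Finset.mem_Icc]
    omega
  have hT1 : ∑ k ∈ Finset.Icc 2 n, ∑ j ∈ Finset.Icc 2 k,
        m ^ (k - j) * (e * (τ j * v j ^ 2))
      ≤ ε * ∑ k ∈ Finset.Icc 2 n, τ k * v k ^ 2 := by
    rw [hswap, Finset.mul_sum]
    apply Finset.sum_le_sum
    intro j hj
    simp only [Finset.mem_Icc] at hj
    have hτj := hτ j (by omega) (le_trans hj.2 hnN)
    have hX : (0:ℝ) ≤ e * (τ j * v j ^ 2) := by positivity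
    calc ∑ k ∈ Finset.Icc j n, m ^ (k - j) * (e * (τ j * v j ^ 2))
        = (∑ k ∈ Finset.Icc j n, m ^ (k - j)) * (e * (τ j * v j ^ 2)) := by
          rw [Finset.sum_mul]
      _ ≤ 1 / (1 - m) * (e * (τ j * v j ^ 2)) :=
          mul_le_mul_of_nonneg_right (hcol j) hX
      _ = ε * (τ j * v j ^ 2) := by
          rw [he]; field_simp
  have hT2 : ∑ k ∈ Finset.Icc 2 n, ∑ j ∈ Finset.Icc 2 k,
        m ^ (k - j) * (1 / (4 * e) * (τ k * w k ^ 2))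
      ≤ 1 / (4 * (1 - m) ^ 2) / ε * ∑ k ∈ Finset.Icc 2 n, τ k * w k ^ 2 := by
    rw [Finset.mul_sum]
    apply Finset.sum_le_sum
    intro k hk
    simp only [Finset.mem_Icc] at hk
    have hτk := hτ k (by omega) (le_trans hk.2 hnN)
    have hY : (0:ℝ) ≤ 1 / (4 * e) * (τ k * w k ^ 2) := by positivity
    calc ∑ j ∈ Finset.Icc 2 k, m ^ (k - j) * (1 / (4 * e) * (τ k * w k ^ 2))
        = (∑ j ∈ Finset.Icc 2 k, m ^ (k - j)) * (1 / (4 * e) * (τ k * w k ^ 2)) := by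
          rw [Finset.sum_mul]
      _ ≤ 1 / (1 - m) * (1 / (4 * e) * (τ k * w k ^ 2)) :=
          mul_le_mul_of_nonneg_right (hrow k) hY
      _ = 1 / (4 * (1 - m) ^ 2) / ε * (τ k * w k ^ 2) := by
          rw [he]; field_simp
  calc ∑ k ∈ Finset.Icc 2 n, ∑ j ∈ Finset.Icc 2 k, θ k j * w k * v j
      ≤ ∑ k ∈ Finset.Icc 2 n, ∑ j ∈ Finset.Icc 2 k,
        (m ^ (k - j) * (e * (τ j * v j ^ 2))
          + m ^ (k - j) * (1 / (4 * e) * (τ k * w k ^ 2))) := by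
        apply Finset.sum_le_sum
        intro k hk
        exact Finset.sum_le_sum (hterm k hk)
    _ = (∑ k ∈ Finset.Icc 2 n, ∑ j ∈ Finset.Icc 2 k,
          m ^ (k - j) * (e * (τ j * v j ^ 2)))
        + ∑ k ∈ Finset.Icc 2 n, ∑ j ∈ Finset.Icc 2 k,
          m ^ (k - j) * (1 / (4 * e) * (τ k * w k ^ 2)) := by
        rw [← Finset.sum_add_distrib]
        exact Finset.sum_congr rfl fun k _ => Finset.sum_add_distrib
    _ ≤ ε * ∑ k ∈ Finset.Icc 2 n, τ k * v k ^ 2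
        + 1 / (4 * (1 - m) ^ 2) / ε * ∑ k ∈ Finset.Icc 2 n, τ k * w k ^ 2 :=
        add_le_add hT1 hT2
end

section
/- Let N ≥ 2 and let positive step sizes τ_1,…,τ_N be given with step ratios r_k := τ_k/τ_{k-1}. Then for every k with 2 ≤ k ≤ N one has −θ_{k-2}^{(k)} b_1^{(2)} τ_1 = τ_k Π_{i=2}^{k} (r_i/(1+2r_i)) ≤ τ_k/2^{k-1}, and consequently Σ_{k=2}^{n} (−θ_{k-2}^{(k)} b_1^{(2)} τ_1) ≤ max_{1≤k≤n} τ_k for every 2 ≤ n ≤ N. -/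
section Aux

variable {N : ℕ} {τ : ℕ → ℝ}

lemma ratio_pos (hτ : ∀ k, 1 ≤ k → k ≤ N → 0 < τ k) {j : ℕ} (h2 : 2 ≤ j) (hj : j ≤ N) :
    0 < ratio τ j := by
  have h1 : 0 < τ (j - 1) := hτ _ (by omega) (by omega)
  exact div_pos (hτ _ (by omega) hj) h1

lemma b0_pos (hτ : ∀ k, 1 ≤ k → k ≤ N → 0 < τ k) {j : ℕ} (h2 : 2 ≤ j) (hj : j ≤ N) :
    0 < b0 τ j := by
  have hr := ratio_pos hτ h2 hj
  have hτj := hτ j (by omega) hj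
  exact div_pos (by linarith) (by positivity)

/-- Closed form of the DOC kernels obtained from the recursion. -/
lemma theta_formula (hτ : ∀ k, 1 ≤ k → k ≤ N → 0 < τ k)
    (θ : ℕ → ℕ → ℝ)
    (hθdiag : ∀ n, 2 ≤ n → θ n n = 1 / b0 τ n)
    (hθrec : ∀ n k, 2 ≤ k → k < n →
      θ n k = -(1 / b0 τ k) * ∑ j ∈ Finset.Icc (k + 1) n, θ n j * bker τ (j - k) j)
    {n : ℕ} (hn2 : 2 ≤ n) (hnN : n ≤ N) :
    ∀ d k, k + d = n → 2 ≤ k →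
      θ n k = (∏ j ∈ Finset.Icc (k + 1) n, (-(b1 τ j) / b0 τ j)) / b0 τ k := by
  intro d
  induction d with
  | zero =>
    intro k hk h2
    have hkn : k = n := by omega
    subst hkn
    rw [hθdiag k h2, Finset.Icc_eq_empty (by omega), Finset.prod_empty]
  | succ d ih =>
    intro k hk h2
    have hkn : k < n := by omega
    rw [hθrec n k h2 hkn]
    have hsum : ∑ j ∈ Finset.Icc (k + 1) n, θ n j * bker τ (j - k) j
        = θ n (k + 1) * b1 τ (k + 1) := by
      rw [Finset.sum_eq_single_of_mem (k + 1)
        (Finset.mem_Icc.mpr ⟨le_refl _, by omega⟩)]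
      · simp [bker]
      · intro j hj hne
        have hj' := Finset.mem_Icc.mp hj
        have : j - k ≠ 0 := by omega
        have h2' : j - k ≠ 1 := by omega
        simp [bker, this, h2']
    rw [hsum, ih (k + 1) (by omega) (by omega)]
    have hsplit : ∏ j ∈ Finset.Icc (k + 1) n, (-(b1 τ j) / b0 τ j)
        = (-(b1 τ (k + 1)) / b0 τ (k + 1)) *
          ∏ j ∈ Finset.Icc (k + 2) n, (-(b1 τ j) / b0 τ j) := by
      rw [show Finset.Icc (k + 1) n = Finset.Ico (k + 1) (n + 1) by
        rw [Finset.Ico_add_one_right_eq_Icc],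
        show Finset.Icc (k + 2) n = Finset.Ico (k + 2) (n + 1) by
        rw [Finset.Ico_add_one_right_eq_Icc]]
      exact Finset.prod_eq_prod_Ico_succ_bot (by omega) _
    rw [hsplit]
    ring

/-- Telescoping of step ratios. -/
lemma tau_telescope (hτ : ∀ k, 1 ≤ k → k ≤ N → 0 < τ k) :
    ∀ n, 1 ≤ n → n ≤ N → τ 1 * ∏ j ∈ Finset.Icc 2 n, ratio τ j = τ n := by
  intro n
  induction n with
  | zero => omega
  | succ m ih =>
    intro h1 hN
    rcases Nat.eq_or_lt_of_le h1 with h | h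
    · simp [← h]
    · have hm1 : 1 ≤ m := by omega
      have hmN : m ≤ N := by omega
      rw [show Finset.Icc 2 (m + 1) = Finset.Ico 2 (m + 2) by exact (Finset.Ico_add_one_right_eq_Icc (a := 2) (b := m + 1)).symm]
      rw [Finset.prod_Ico_succ_top (by omega)]
      rw [show Finset.Ico 2 (m + 1) = Finset.Icc 2 m by rw [Finset.Ico_add_one_right_eq_Icc]]
      rw [← mul_assoc, ih hm1 hmN]
      have hτm : τ m ≠ 0 := ne_of_gt (hτ m hm1 hmN)
      field_simp [ratio]
      rw [ratio, Nat.add_sub_cancel]; field_simp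

lemma mySumHalfEq : ∀ n : ℕ, 1 ≤ n →
    ∑ k ∈ Finset.Icc 2 n, ((1 : ℝ) / 2) ^ (k - 1) = 1 - (1 / 2) ^ (n - 1) := by
  intro n
  induction n with
  | zero => omega
  | succ m ih =>
    intro h1
    rcases Nat.eq_or_lt_of_le h1 with h | h
    · rw [← h]; norm_num
    · have hm1 : 1 ≤ m := by omega
      rw [show Finset.Icc 2 (m + 1) = Finset.Ico 2 (m + 2) by exact (Finset.Ico_add_one_right_eq_Icc (a := 2) (b := m + 1)).symm]
      rw [Finset.sum_Ico_succ_top (by omega)]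
      rw [show Finset.Ico 2 (m + 1) = Finset.Icc 2 m by rw [Finset.Ico_add_one_right_eq_Icc]]
      rw [ih hm1]
      have he : (1 / 2 : ℝ) ^ (m + 1 - 1) = (1 / 2) ^ (m - 1) * (1 / 2) := by
        rw [show m + 1 - 1 = (m - 1) + 1 by omega, pow_succ]
      rw [he]
      ring

end Aux

theorem doc_first_column_decay
    (N : ℕ) (hN : 2 ≤ N) (τ : ℕ → ℝ)
    (hτ : ∀ k, 1 ≤ k → k ≤ N → 0 < τ k)
    (θ : ℕ → ℕ → ℝ)
    (hθdiag : ∀ n, 2 ≤ n → θ n n = 1 / b0 τ n)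
    (hθrec : ∀ n k, 2 ≤ k → k < n →
      θ n k = -(1 / b0 τ k) * ∑ j ∈ Finset.Icc (k + 1) n, θ n j * bker τ (j - k) j) :
    (∀ k, 2 ≤ k → k ≤ N →
      -(θ k 2 * b1 τ 2 * τ 1)
          = τ k * ∏ i ∈ Finset.Icc 2 k, ratio τ i / (1 + 2 * ratio τ i)
        ∧ -(θ k 2 * b1 τ 2 * τ 1) ≤ τ k / 2 ^ (k - 1)) ∧
      ∀ n, ∀ hn : 2 ≤ n, n ≤ N →
        ∑ k ∈ Finset.Icc 2 n, -(θ k 2 * b1 τ 2 * τ 1)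
          ≤ (Finset.Icc 1 n).sup' (Finset.nonempty_Icc.mpr (by omega)) τ := by
  -- main identity
  have key : ∀ k, 2 ≤ k → k ≤ N →
      -(θ k 2 * b1 τ 2 * τ 1)
        = τ k * ∏ i ∈ Finset.Icc 2 k, ratio τ i / (1 + 2 * ratio τ i) := by
    intro k h2 hkN
    have hform := theta_formula hτ θ hθdiag hθrec h2 hkN (k - 2) 2 (by omega) le_rfl
    -- θ k 2 = (∏ j ∈ Icc 3 k, -(b1 j)/b0 j) / b0 2
    have hsplit : ∏ j ∈ Finset.Icc 2 k, (-(b1 τ j) / b0 τ j)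
        = (-(b1 τ 2) / b0 τ 2) * ∏ j ∈ Finset.Icc 3 k, (-(b1 τ j) / b0 τ j) := by
      rw [show Finset.Icc 2 k = Finset.Ico 2 (k + 1) by rw [Finset.Ico_add_one_right_eq_Icc],
        show Finset.Icc 3 k = Finset.Ico 3 (k + 1) by rw [Finset.Ico_add_one_right_eq_Icc]]
      exact Finset.prod_eq_prod_Ico_succ_bot (by omega) _
    have hb02 : b0 τ 2 ≠ 0 := ne_of_gt (b0_pos hτ le_rfl hN)
    have step1 : -(θ k 2 * b1 τ 2 * τ 1)
        = τ 1 * ∏ j ∈ Finset.Icc 2 k, (-(b1 τ j) / b0 τ j) := by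
      rw [hform, hsplit]
      field_simp
    -- rewrite each factor
    have hfactor : ∀ j ∈ Finset.Icc 2 k,
        -(b1 τ j) / b0 τ j = ratio τ j * (ratio τ j / (1 + 2 * ratio τ j)) := by
      intro j hj
      have hj' := Finset.mem_Icc.mp hj
      have hr := ratio_pos hτ hj'.1 (le_trans hj'.2 hkN)
      have hτj := hτ j (by omega) (le_trans hj'.2 hkN)
      have hd : τ j * (1 + ratio τ j) ≠ 0 := by positivity
      have hd2 : (1 + 2 * ratio τ j) ≠ 0 := by positivity
      unfold b1 b0
      field_simp
    rw [step1, Finset.prod_congr rfl hfactor, Finset.prod_mul_distrib, ← mul_assoc,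
      tau_telescope hτ k (by omega) hkN]
  have prod_bound : ∀ k, 2 ≤ k → k ≤ N →
      τ k * ∏ i ∈ Finset.Icc 2 k, ratio τ i / (1 + 2 * ratio τ i) ≤ τ k / 2 ^ (k - 1) := by
    intro k h2 hkN
    have hτk := hτ k (by omega) hkN
    have hprod : ∏ i ∈ Finset.Icc 2 k, ratio τ i / (1 + 2 * ratio τ i)
        ≤ ((1 : ℝ) / 2) ^ (k - 1) := by
      have hcard : (Finset.Icc 2 k).card = k - 1 := by
        rw [Nat.card_Icc]; omega
      calc ∏ i ∈ Finset.Icc 2 k, ratio τ i / (1 + 2 * ratio τ i)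
          ≤ ∏ i ∈ Finset.Icc 2 k, ((1 : ℝ) / 2) := by
            apply Finset.prod_le_prod
            · intro i hi
              have hi' := Finset.mem_Icc.mp hi
              have hr := ratio_pos hτ hi'.1 (le_trans hi'.2 hkN)
              positivity
            · intro i hi
              have hi' := Finset.mem_Icc.mp hi
              have hr := ratio_pos hτ hi'.1 (le_trans hi'.2 hkN)
              rw [div_le_div_iff₀ (by linarith) (by norm_num)]
              linarith
        _ = ((1 : ℝ) / 2) ^ (k - 1) := by rw [Finset.prod_const, hcard]
    calc τ k * ∏ i ∈ Finset.Icc 2 k, ratio τ i / (1 + 2 * ratio τ i)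
        ≤ τ k * ((1 : ℝ) / 2) ^ (k - 1) :=
          mul_le_mul_of_nonneg_left hprod (le_of_lt hτk)
      _ = τ k / 2 ^ (k - 1) := by rw [div_pow, one_pow]; ring
  refine ⟨fun k h2 hkN => ⟨key k h2 hkN, by rw [key k h2 hkN]; exact prod_bound k h2 hkN⟩,
    fun n hn2 hnN => ?_⟩
  set M := (Finset.Icc 1 n).sup' (Finset.nonempty_Icc.mpr (by omega)) τ with hM
  have hM0 : 0 < M := lt_of_lt_of_le (hτ 1 le_rfl (by omega))
    (Finset.le_sup' τ (Finset.mem_Icc.mpr ⟨le_rfl, by omega⟩))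
  have hstep : ∑ k ∈ Finset.Icc 2 n, -(θ k 2 * b1 τ 2 * τ 1)
      ≤ ∑ k ∈ Finset.Icc 2 n, M * ((1 : ℝ) / 2) ^ (k - 1) := by
    apply Finset.sum_le_sum
    intro k hk
    have hk' := Finset.mem_Icc.mp hk
    have hkN : k ≤ N := le_trans hk'.2 hnN
    have h1 : -(θ k 2 * b1 τ 2 * τ 1) ≤ τ k / 2 ^ (k - 1) := by
      rw [key k hk'.1 hkN]; exact prod_bound k hk'.1 hkN
    have hτM : τ k ≤ M := Finset.le_sup' τ (Finset.mem_Icc.mpr ⟨by omega, hk'.2⟩)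
    have h2pos : (0 : ℝ) < 2 ^ (k - 1) := by positivity
    calc -(θ k 2 * b1 τ 2 * τ 1) ≤ τ k / 2 ^ (k - 1) := h1
      _ ≤ M / 2 ^ (k - 1) := by gcongr
      _ = M * ((1 : ℝ) / 2) ^ (k - 1) := by rw [div_pow, one_pow]; ring
  calc ∑ k ∈ Finset.Icc 2 n, -(θ k 2 * b1 τ 2 * τ 1)
      ≤ ∑ k ∈ Finset.Icc 2 n, M * ((1 : ℝ) / 2) ^ (k - 1) := hstep
    _ = M * ∑ k ∈ Finset.Icc 2 n, ((1 : ℝ) / 2) ^ (k - 1) := by rw [Finset.mul_sum]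
    _ = M * (1 - (1 / 2) ^ (n - 1)) := by rw [mySumHalfEq n (by omega)]
    _ ≤ M * 1 := by
        apply mul_le_mul_of_nonneg_left _ (le_of_lt hM0)
        have : (0 : ℝ) < (1 / 2) ^ (n - 1) := by positivity
        linarith
    _ = M := mul_one M
end
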